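/- arXiv:1812.01482 — 2 statements merged into one kernel-verified Lean document; each statement's English description precedes it below -/
import Mathlib

section
/- Let G be a finite simple bipartite graph with bipartition {V₁, V₂} in which every vertex has degree at least 1, and let τ : V(G) → ℕ be given by τ(v) = 1 for v ∈ V₁ and τ(v) = deg(v) for v ∈ V₂. If S is a target set of G, then every vertex u ∈ V₁ \ S has at least one neighbor in V₂ ∩ S, i.e., N(u) ∩ (V₂ ∩ S) ≠ ∅. -/
open scoped Classical

/-- The neighborhood of `u` in `G`, as a finset. -/
noncomputable def nbrs {V : Type*} [Fintype V] (G : SimpleGraph V) (u : V) : Finset V :=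
  Finset.univ.filter (fun w => G.Adj u w)

/-- The diffusion process: `diffusion G τ S i` is the set `A[S,i]` of vertices
active after `i` rounds starting from seed set `S`. -/
noncomputable def diffusion {V : Type*} [Fintype V] (G : SimpleGraph V) (τ : V → ℕ)
    (S : Finset V) : ℕ → Finset V
  | 0 => S
  | (i + 1) => diffusion G τ S i ∪
      Finset.univ.filter (fun u => τ u ≤ (nbrs G u ∩ diffusion G τ S i).card)

/-- The influence of a seed set `S`: all vertices eventually activated. -/
def influence {V : Type*} [Fintype V] (G : SimpleGraph V) (τ : V → ℕ) (S : Finset V) : Set V :=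
  {v | ∃ i, v ∈ diffusion G τ S i}

/-- `S` is a target set if its influence is the whole vertex set. -/
def isTargetSet {V : Type*} [Fintype V] (G : SimpleGraph V) (τ : V → ℕ) (S : Finset V) : Prop :=
  influence G τ S = Set.univ

/-- `C` is a vertex cover of `G`. -/
def isVertexCover {V : Type*} [Fintype V] (G : SimpleGraph V) (C : Finset V) : Prop :=
  ∀ u v, G.Adj u v → u ∈ C ∨ v ∈ C

/- A vertex of `V₁ \ S` becomes active through a single active neighbour `w`. If `w ∉ S`, then
`w ∈ V₂` has full threshold, so it was activated only after all its neighbours, `u` included, were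
already active: `u` was active strictly earlier. Descending on the activation time, some such
neighbour must lie in `S`. -/

section Diffusion

variable {V : Type*} [Fintype V] {G : SimpleGraph V} {τ : V → ℕ} {S : Finset V}

theorem mem_nbrs {u w : V} : w ∈ nbrs G u ↔ G.Adj u w := by
  simp [nbrs]

theorem mem_diffusion_succ {v : V} {i : ℕ} :
    v ∈ diffusion G τ S (i + 1) ↔
      v ∈ diffusion G τ S i ∨ τ v ≤ (nbrs G v ∩ diffusion G τ S i).card := by
  simp [diffusion]

theorem exists_lt_threshold_le_of_mem_diffusion {v : V} (hvS : v ∉ S) :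
    ∀ {j : ℕ}, v ∈ diffusion G τ S j →
      ∃ k < j, τ v ≤ (nbrs G v ∩ diffusion G τ S k).card
  | 0, hv => absurd hv hvS
  | j + 1, hv => by
    rcases mem_diffusion_succ.mp hv with hv | hv
    · obtain ⟨k, hk, hτ⟩ := exists_lt_threshold_le_of_mem_diffusion hvS hv
      exact ⟨k, hk.trans j.lt_succ_self, hτ⟩
    · exact ⟨j, j.lt_succ_self, hv⟩

theorem exists_lt_nbrs_subset_diffusion {w : V} (hwS : w ∉ S) (hτ : (nbrs G w).card ≤ τ w)
    {j : ℕ} (hw : w ∈ diffusion G τ S j) : ∃ k < j, nbrs G w ⊆ diffusion G τ S k := by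
  obtain ⟨k, hk, hact⟩ := exists_lt_threshold_le_of_mem_diffusion hwS hw
  exact ⟨k, hk, Finset.inter_eq_left.mp
    (Finset.eq_of_subset_of_card_le Finset.inter_subset_left (hτ.trans hact))⟩

theorem exists_lt_adj_mem_diffusion {u : V} (huS : u ∉ S) (hτ : 1 ≤ τ u) {j : ℕ}
    (hu : u ∈ diffusion G τ S j) : ∃ k < j, ∃ w ∈ diffusion G τ S k, G.Adj u w := by
  obtain ⟨k, hk, hact⟩ := exists_lt_threshold_le_of_mem_diffusion huS hu
  obtain ⟨w, hw⟩ := Finset.card_pos.mp (hτ.trans hact)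
  rw [Finset.mem_inter, mem_nbrs] at hw
  exact ⟨k, hk, w, hw.2, hw.1⟩

theorem exists_adj_mem_of_mem_diffusion (A : Set V) (hτA : ∀ u ∈ A, 1 ≤ τ u)
    (hτnbr : ∀ u ∈ A, ∀ w, G.Adj u w → (nbrs G w).card ≤ τ w) (j : ℕ) :
    ∀ u ∈ A, u ∉ S → u ∈ diffusion G τ S j → ∃ w ∈ S, G.Adj u w := by
  induction j using Nat.strong_induction_on with
  | _ j ih =>
    intro u huA huS hu
    obtain ⟨k, hkj, w, hw, hadj⟩ := exists_lt_adj_mem_diffusion huS (hτA u huA) hu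
    by_cases hwS : w ∈ S
    · exact ⟨w, hwS, hadj⟩
    obtain ⟨l, hlk, hsub⟩ := exists_lt_nbrs_subset_diffusion hwS (hτnbr u huA w hadj) hw
    exact ih l (hlk.trans hkj) u huA huS (hsub (mem_nbrs.mpr hadj.symm))

end Diffusion

theorem targetSet_neighbor_in_V2_general {V : Type*} [Fintype V] (G : SimpleGraph V) (τ : V → ℕ)
    (V1 V2 : Finset V) (hdisj : Disjoint V1 V2)
    (hbip : ∀ u v : V, G.Adj u v → (u ∈ V1 ∧ v ∈ V2) ∨ (u ∈ V2 ∧ v ∈ V1))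
    (hτ1 : ∀ v ∈ V1, τ v = 1) (hτ2 : ∀ v ∈ V2, τ v = (nbrs G v).card)
    (S : Finset V) (hS : isTargetSet G τ S) :
    ∀ u ∈ V1, u ∉ S → ∃ w ∈ V2 ∩ S, G.Adj u w := by
  have mem_V2 : ∀ u ∈ V1, ∀ w, G.Adj u w → w ∈ V2 := fun u hu w hadj =>
    (hbip u w hadj).elim And.right fun h => absurd h.1 (Finset.disjoint_left.mp hdisj hu)
  intro u hu1 huS
  obtain ⟨j, hj⟩ : u ∈ influence G τ S := hS ▸ Set.mem_univ u
  obtain ⟨w, hwS, hadj⟩ := exists_adj_mem_of_mem_diffusion (↑V1)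
    (fun v hv => (hτ1 v hv).ge)
    (fun v hv w hadj => (hτ2 w (mem_V2 v hv w hadj)).ge) j u hu1 huS hj
  exact ⟨w, Finset.mem_inter.mpr ⟨mem_V2 u hu1 w hadj, hwS⟩, hadj⟩

/-- In the bipartite setting, every vertex of `V₁` outside a target set `S`
has a neighbor in `V₂ ∩ S`. -/
theorem targetSet_neighbor_in_V2 {V : Type*} [Fintype V] (G : SimpleGraph V) (τ : V → ℕ)
    (V1 V2 : Finset V) (hdisj : Disjoint V1 V2) (hunion : V1 ∪ V2 = Finset.univ)
    (hbip : ∀ u v : V, G.Adj u v → (u ∈ V1 ∧ v ∈ V2) ∨ (u ∈ V2 ∧ v ∈ V1))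
    (hdeg : ∀ v : V, 1 ≤ (nbrs G v).card)
    (hτ1 : ∀ v ∈ V1, τ v = 1) (hτ2 : ∀ v ∈ V2, τ v = (nbrs G v).card)
    (S : Finset V) (hS : isTargetSet G τ S) :
    ∀ u ∈ V1, u ∉ S → ∃ w ∈ V2 ∩ S, G.Adj u w :=
  targetSet_neighbor_in_V2_general G τ V1 V2 hdisj hbip hτ1 hτ2 S hS
end

section
/- Let G be a finite simple undirected graph with threshold function τ : V(G) → ℕ satisfying τ(v) ≥ 1 for every vertex v, and let G′ be the graph obtained from G by subdividing every edge exactly once (replacing each edge uv by a new vertex w_{uv} adjacent exactly to u and v), with threshold function τ′ given by τ′(v) = τ(v) for every original vertex v ∈ V(G) and τ′(w) = 1 for every subdivision vertex w. Then the minimum cardinality of a target set of (G, τ) equals the minimum cardinality of a target set of (G′, τ′). -/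
open scoped Classical

/-- The graph obtained from `G` by subdividing every edge exactly once: each
edge `e` of `G` becomes a new vertex adjacent exactly to the two endpoints of `e`. -/
def subdiv {V : Type*} (G : SimpleGraph V) : SimpleGraph (V ⊕ G.edgeSet) where
  Adj u w :=
    (∃ (v : V) (e : G.edgeSet), u = Sum.inl v ∧ w = Sum.inr e ∧ v ∈ (e : Sym2 V)) ∨
    (∃ (v : V) (e : G.edgeSet), w = Sum.inl v ∧ u = Sum.inr e ∧ v ∈ (e : Sym2 V))
  symm := by
    constructor
    rintro u w (⟨v, e, h1, h2, h3⟩ | ⟨v, e, h1, h2, h3⟩)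
    · exact Or.inr ⟨v, e, h1, h2, h3⟩
    · exact Or.inl ⟨v, e, h1, h2, h3⟩
  loopless := by
    constructor
    rintro u (⟨v, e, h1, h2, -⟩ | ⟨v, e, h1, h2, -⟩) <;> rw [h1] at h2 <;>
      exact Sum.inl_ne_inr h2


section Aux
variable {V : Type*} [Fintype V] (G : SimpleGraph V) (τ : V → ℕ) (S : Finset V)

lemma diffusion_mono : Monotone (diffusion G τ S) :=
  monotone_nat_of_le_succ (fun _ => Finset.subset_union_left)

lemma seed_subset_influence {v : V} (hv : v ∈ S) : v ∈ influence G τ S := ⟨0, hv⟩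

lemma exists_uniform_index (T : Finset V) (hT : ∀ t ∈ T, t ∈ influence G τ S) :
    ∃ i, ∀ t ∈ T, t ∈ diffusion G τ S i := by
  classical
  induction T using Finset.induction_on with
  | empty => exact ⟨0, fun t ht => absurd ht (Finset.notMem_empty t)⟩
  | @insert a T ha ih =>
    obtain ⟨i, hi⟩ := ih (fun t ht => hT t (Finset.mem_insert_of_mem ht))
    obtain ⟨j, hj⟩ := hT a (Finset.mem_insert_self a T)
    refine ⟨max i j, fun t ht => ?_⟩
    rcases Finset.mem_insert.mp ht with rfl | ht
    · exact diffusion_mono G τ S (le_max_right i j) hj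
    · exact diffusion_mono G τ S (le_max_left i j) (hi t ht)

lemma mem_influence_of_nbrs (u : V) (T : Finset V)
    (hT : ∀ t ∈ T, t ∈ influence G τ S)
    (h : τ u ≤ (nbrs G u ∩ T).card) : u ∈ influence G τ S := by
  obtain ⟨i, hi⟩ := exists_uniform_index G τ S T hT
  refine ⟨i + 1, ?_⟩
  have hcard : (nbrs G u ∩ T).card ≤ (nbrs G u ∩ diffusion G τ S i).card :=
    Finset.card_le_card (Finset.inter_subset_inter (le_refl _) (fun t ht => hi t ht))
  simp only [diffusion]
  exact Finset.mem_union_right _ (Finset.mem_filter.mpr ⟨Finset.mem_univ u, le_trans h hcard⟩)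

lemma univ_target : isTargetSet G τ Finset.univ :=
  Set.eq_univ_of_forall fun v => ⟨0, Finset.mem_univ v⟩

end Aux

section Subdiv
variable {V : Type*} [Fintype V] (G : SimpleGraph V) (τ : V → ℕ)

noncomputable local instance (priority := 2000) sumDecEq : DecidableEq (V ⊕ G.edgeSet) :=
  fun a b => Classical.propDecidable (a = b)

/-- Direction 1 key lemma. -/
lemma inl_mem_influence_subdiv (S : Finset V) (S' : Finset (V ⊕ G.edgeSet))
    (hseed : ∀ v ∈ S, (Sum.inl v : V ⊕ G.edgeSet) ∈ S') :
    ∀ i, ∀ v ∈ diffusion G τ S i,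
      (Sum.inl v : V ⊕ G.edgeSet) ∈
        influence (subdiv G) (Sum.elim τ fun _ => 1) S' := by
  intro i
  induction i with
  | zero =>
    intro v hv
    exact seed_subset_influence _ _ _ (hseed v hv)
  | succ i ih =>
    intro v hv
    simp only [diffusion] at hv
    rcases Finset.mem_union.mp hv with hv | hv
    · exact ih v hv
    · have hτv : τ v ≤ (nbrs G v ∩ diffusion G τ S i).card := (Finset.mem_filter.mp hv).2
      have hadj : ∀ u ∈ nbrs G v ∩ diffusion G τ S i, G.Adj v u := fun u hu =>
        (Finset.mem_filter.mp (Finset.mem_inter.mp hu).1).2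
      set T' : Finset (V ⊕ G.edgeSet) :=
        (nbrs (subdiv G) (Sum.inl v)).filter
          (fun t => t ∈ influence (subdiv G) (Sum.elim τ fun _ => 1) S') with hT'
      have hTinf : ∀ t ∈ T',
          t ∈ influence (subdiv G) (Sum.elim τ fun _ => 1) S' :=
        fun t ht => (Finset.mem_filter.mp ht).2
      refine mem_influence_of_nbrs _ _ _ (Sum.inl v) T' hTinf ?_
      have step1 : (nbrs G v ∩ diffusion G τ S i).card ≤ T'.card := by
        refine Finset.card_le_card_of_injOn
          (fun u => if h : G.Adj v u then
            (Sum.inr ⟨s(v, u), G.mem_edgeSet.mpr h⟩ : V ⊕ G.edgeSet) else Sum.inl u) ?_ ?_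
        · intro u hu
          show (if h : G.Adj v u then
            (Sum.inr ⟨s(v, u), G.mem_edgeSet.mpr h⟩ : V ⊕ G.edgeSet) else Sum.inl u) ∈ T'
          rw [dif_pos (hadj u hu)]
          refine Finset.mem_filter.mpr ⟨?_, ?_⟩
          · have hadj1 : (subdiv G).Adj (Sum.inl v)
                (Sum.inr ⟨s(v, u), G.mem_edgeSet.mpr (hadj u hu)⟩) :=
              Or.inl ⟨v, _, rfl, rfl, Sym2.mem_mk_left v u⟩
            simp only [nbrs, Finset.mem_filter]
            exact ⟨Finset.mem_univ _, hadj1⟩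
          · have hinlu := ih u (Finset.mem_inter.mp hu).2
            refine mem_influence_of_nbrs _ _ _ _ {Sum.inl u} (by simpa using hinlu) ?_
            have hadj' : (subdiv G).Adj
                (Sum.inr ⟨s(v, u), G.mem_edgeSet.mpr (hadj u hu)⟩) (Sum.inl u) :=
              Or.inr ⟨u, _, rfl, rfl, Sym2.mem_mk_right v u⟩
            have hm : (Sum.inl u : V ⊕ G.edgeSet) ∈
                nbrs (subdiv G) (Sum.inr ⟨s(v, u), G.mem_edgeSet.mpr (hadj u hu)⟩)
                  ∩ {Sum.inl u} := by
              refine Finset.mem_inter.mpr ⟨?_, Finset.mem_singleton_self _⟩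
              simp only [nbrs, Finset.mem_filter]
              exact ⟨Finset.mem_univ _, hadj'⟩
            exact Finset.one_le_card.mpr ⟨_, hm⟩
        · intro a ha b hb hab
          simp only [dif_pos (hadj a (Finset.mem_coe.mp ha)),
            dif_pos (hadj b (Finset.mem_coe.mp hb)), Sum.inr.injEq, Subtype.mk.injEq] at hab
          exact Sym2.congr_right.mp hab
      have step2 : T'.card ≤ (nbrs (subdiv G) (Sum.inl v) ∩ T').card :=
        Finset.card_le_card (fun t ht =>
          Finset.mem_inter.mpr ⟨Finset.filter_subset _ _ ht, ht⟩)
      exact le_trans hτv (le_trans step1 step2)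

/-- Direction 2 key lemma. -/
lemma subdiv_influence_to_base (S' : Finset (V ⊕ G.edgeSet)) (S : Finset V)
    (hS : ∀ x ∈ S', (∀ v, x = Sum.inl v → v ∈ S) ∧
      (∀ e : G.edgeSet, x = Sum.inr e → ∃ u ∈ (e : Sym2 V), u ∈ S)) :
    ∀ i, ∀ x ∈ diffusion (subdiv G) (Sum.elim τ fun _ => 1) S' i,
      (∀ v, x = Sum.inl v → v ∈ influence G τ S) ∧
      (∀ e : G.edgeSet, x = Sum.inr e → ∃ u ∈ (e : Sym2 V), u ∈ influence G τ S) := by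
  intro i
  induction i with
  | zero =>
    intro x hx
    refine ⟨fun v hv => seed_subset_influence G τ S ((hS x hx).1 v hv), fun e he => ?_⟩
    obtain ⟨u, hu, huS⟩ := (hS x hx).2 e he
    exact ⟨u, hu, seed_subset_influence G τ S huS⟩
  | succ i ih =>
    intro x hx
    simp only [diffusion] at hx
    rcases Finset.mem_union.mp hx with hx | hx
    · exact ih x hx
    · have hτx := (Finset.mem_filter.mp hx).2
      constructor
      · rintro v rfl
        by_cases hv : v ∈ influence G τ S
        · exact hv
        classical
        set T : Finset V := (nbrs G v).filter (fun u => u ∈ influence G τ S) with hT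
        refine mem_influence_of_nbrs G τ S v T (fun t ht => (Finset.mem_filter.mp ht).2)
          (le_trans hτx (le_trans ?_ (Finset.card_le_card (fun t ht =>
            Finset.mem_inter.mpr ⟨Finset.filter_subset _ _ ht, ht⟩))))
        have key : ∀ x' ∈ nbrs (subdiv G) (Sum.inl v) ∩
            diffusion (subdiv G) (Sum.elim τ fun _ => 1) S' i,
            ∃ (e : G.edgeSet) (h : v ∈ (e : Sym2 V)), x' = Sum.inr e ∧
              Sym2.Mem.other h ∈ T := by
          intro x' hx'
          obtain ⟨hx'n, hx'A⟩ := Finset.mem_inter.mp hx'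
          have hadjx : (subdiv G).Adj (Sum.inl v) x' := (Finset.mem_filter.mp hx'n).2
          rcases hadjx with ⟨v', e, h1, h2, h3⟩ | ⟨v', e, h1, h2, h3⟩
          · have hvv : v' = v := by simpa using h1.symm
            subst hvv
            refine ⟨e, h3, h2, ?_⟩
            have hospec := Sym2.other_spec h3
            have hadjvo : G.Adj v' (Sym2.Mem.other h3) := by
              rw [← SimpleGraph.mem_edgeSet, hospec]; exact e.2
            obtain ⟨u, hu, huinf⟩ := (ih x' hx'A).2 e h2
            have hcases : u = v' ∨ u = Sym2.Mem.other h3 := by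
              rw [← hospec] at hu; exact Sym2.mem_iff.mp hu
            rcases hcases with rfl | rfl
            · exact absurd huinf hv
            · refine Finset.mem_filter.mpr ⟨?_, huinf⟩
              simp only [nbrs, Finset.mem_filter]
              exact ⟨Finset.mem_univ _, hadjvo⟩
          · exact absurd h2 (by simp)
        refine Finset.card_le_card_of_injOn
          (fun x' => Sum.elim (fun _ => v)
            (fun (e : G.edgeSet) =>
              if h : v ∈ (e : Sym2 V) then Sym2.Mem.other h else v) x') ?_ ?_
        · intro x' hx'
          obtain ⟨e, h, rfl, hmem⟩ := key x' hx'
          show Sum.elim (fun _ => v)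
            (fun (e : G.edgeSet) =>
              if h : v ∈ (e : Sym2 V) then Sym2.Mem.other h else v) (Sum.inr e) ∈ T
          rw [Sum.elim_inr, dif_pos h]
          exact hmem
        · intro a ha b hb hab
          obtain ⟨e, h, rfl, -⟩ := key a (Finset.mem_coe.mp ha)
          obtain ⟨e', h', rfl, -⟩ := key b (Finset.mem_coe.mp hb)
          simp only [Sum.elim_inr] at hab
          rw [dif_pos h, dif_pos h'] at hab
          have : (e : Sym2 V) = (e' : Sym2 V) := by
            rw [← Sym2.other_spec h, ← Sym2.other_spec h', hab]
          exact congrArg Sum.inr (Subtype.ext this)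
      · rintro e rfl
        have h1 : (0 : ℕ) < (nbrs (subdiv G) (Sum.inr e : V ⊕ G.edgeSet) ∩
            diffusion (subdiv G) (Sum.elim τ fun _ => 1) S' i).card :=
          lt_of_lt_of_le Nat.zero_lt_one hτx
        obtain ⟨y, hy⟩ := Finset.card_pos.mp h1
        obtain ⟨hyn, hyA⟩ := Finset.mem_inter.mp hy
        have hadjy : (subdiv G).Adj (Sum.inr e) y := (Finset.mem_filter.mp hyn).2
        rcases hadjy with ⟨v', e', h1', h2', h3'⟩ | ⟨v', e', h1', h2', h3'⟩
        · exact absurd h1' (by simp)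
        · have hee : e' = e := by simpa using h2'.symm
          subst hee
          exact ⟨v', h3', (ih y hyA).1 v' h1'⟩

end Subdiv

/-- Subdividing every edge once (giving the new vertices threshold `1`) preserves
the minimum size of a target set, provided all thresholds are at least `1`. -/
theorem minTargetSet_subdiv {V : Type*} [Fintype V] (G : SimpleGraph V) (τ : V → ℕ)
    (hτ : ∀ v, 1 ≤ τ v) :
    sInf {k : ℕ | ∃ S : Finset V, isTargetSet G τ S ∧ S.card = k} =
      sInf {k : ℕ | ∃ S' : Finset (V ⊕ G.edgeSet),
        isTargetSet (subdiv G) (Sum.elim τ (fun _ => 1)) S' ∧ S'.card = k} := by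
  classical
  have hAne : {k : ℕ | ∃ S : Finset V, isTargetSet G τ S ∧ S.card = k}.Nonempty :=
    ⟨(Finset.univ : Finset V).card, Finset.univ, univ_target G τ, rfl⟩
  have hBne : {k : ℕ | ∃ S' : Finset (V ⊕ G.edgeSet),
      isTargetSet (subdiv G) (Sum.elim τ (fun _ => 1)) S' ∧ S'.card = k}.Nonempty :=
    ⟨(Finset.univ : Finset (V ⊕ G.edgeSet)).card, Finset.univ, univ_target _ _, rfl⟩
  refine le_antisymm ?_ ?_
  · -- sInf A ≤ sInf B : from a minimum target set S' of the subdivision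
    obtain ⟨S', hS', hcard'⟩ := Nat.sInf_mem hBne
    set pick : V ⊕ G.edgeSet → V := Sum.elim id (fun e => (e : Sym2 V).out.1) with hpick
    set S : Finset V := S'.image pick with hSdef
    have hSprop : ∀ x ∈ S', (∀ v, x = Sum.inl v → v ∈ S) ∧
        (∀ e : G.edgeSet, x = Sum.inr e → ∃ u ∈ (e : Sym2 V), u ∈ S) := by
      intro x hx
      constructor
      · rintro v rfl
        exact Finset.mem_image_of_mem pick hx
      · rintro e rfl
        exact ⟨(e : Sym2 V).out.1, Sym2.out_fst_mem _, Finset.mem_image_of_mem pick hx⟩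
    have htarget : isTargetSet G τ S := by
      refine Set.eq_univ_of_forall fun v => ?_
      have hvin : (Sum.inl v : V ⊕ G.edgeSet) ∈
          influence (subdiv G) (Sum.elim τ fun _ => 1) S' := hS'.symm ▸ Set.mem_univ _
      obtain ⟨i, hi⟩ := hvin
      exact (subdiv_influence_to_base G τ S' S hSprop i _ hi).1 v rfl
    calc sInf {k : ℕ | ∃ S : Finset V, isTargetSet G τ S ∧ S.card = k}
        ≤ S.card := Nat.sInf_le ⟨S, htarget, rfl⟩
      _ ≤ S'.card := Finset.card_image_le
      _ = _ := hcard'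
  · -- sInf B ≤ sInf A : from a minimum target set S of G
    obtain ⟨S, hS, hcard⟩ := Nat.sInf_mem hAne
    have htarget : isTargetSet (subdiv G) (Sum.elim τ (fun _ => 1)) (S.image Sum.inl) := by
      refine Set.eq_univ_of_forall fun x => ?_
      have hinl : ∀ v : V, (Sum.inl v : V ⊕ G.edgeSet) ∈
          influence (subdiv G) (Sum.elim τ fun _ => 1) (S.image Sum.inl) := by
        intro v
        have hvin : v ∈ influence G τ S := hS.symm ▸ Set.mem_univ _
        obtain ⟨i, hi⟩ := hvin
        exact inl_mem_influence_subdiv G τ S (S.image Sum.inl)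
          (fun u hu => Finset.mem_image_of_mem _ hu) i v hi
      cases x with
      | inl v => exact hinl v
      | inr e =>
        have ha : (e : Sym2 V).out.1 ∈ (e : Sym2 V) := Sym2.out_fst_mem _
        have hadj : (subdiv G).Adj (Sum.inr e) (Sum.inl (e : Sym2 V).out.1) :=
          Or.inr ⟨_, e, rfl, rfl, ha⟩
        refine mem_influence_of_nbrs _ _ _ (Sum.inr e) {Sum.inl (e : Sym2 V).out.1}
          (by simpa using hinl (e : Sym2 V).out.1)
          (Finset.one_le_card.mpr ⟨Sum.inl (e : Sym2 V).out.1, ?_⟩)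
        simp only [Finset.mem_inter, nbrs, Finset.mem_filter]
        exact ⟨⟨Finset.mem_univ _, hadj⟩, Finset.mem_singleton_self _⟩
    calc sInf {k : ℕ | ∃ S' : Finset (V ⊕ G.edgeSet),
          isTargetSet (subdiv G) (Sum.elim τ (fun _ => 1)) S' ∧ S'.card = k}
        ≤ (S.image Sum.inl).card := Nat.sInf_le ⟨S.image Sum.inl, htarget, rfl⟩
      _ = S.card := Finset.card_image_of_injective _ Sum.inl_injective
      _ = _ := hcard
end
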